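/- Let d ≥ 1, let X and Y be independent ℝ^d-valued random variables each with density f with respect to Lebesgue measure, let H be an invertible d×d real matrix, let K : ℝ^d → ℝ be bounded, measurable and compactly supported, and let ρ : ℝ^d → ℝ be bounded and measurable. Then for all x, t ∈ ℝ^d, E[K_H(X − x)² · K_H(Y − t)² · ρ(X − Y)²] = |det H|⁻² ∫∫_{ℝ^d×ℝ^d} K(p)² K(q)² ρ(x − t + H(p − q))² f(x + Hp) f(t + Hq) dp dq. -/

import Mathlib

/-!
Independence turns the expectation into an integral against the product of the two laws, and
since the integrand is bounded and the laws are probability measures, Fubini and the densities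
reduce it to an iterated Lebesgue integral. The affine substitutions `u = x + H p`, `v = t + H q`
each contribute a Jacobian `|det H|`, which cancel two of the four factors `|det H|⁻¹` coming
from the squared rescaled kernels.
-/

open MeasureTheory ProbabilityTheory Filter
open scoped ENNReal NNReal Topology

noncomputable section

/-- The rescaled kernel `K_H(v) = |det H|⁻¹ * K (H⁻¹ v)`. -/
def kernelScaled {d : ℕ} (H : Matrix (Fin d) (Fin d) ℝ) (K : (Fin d → ℝ) → ℝ)
    (v : Fin d → ℝ) : ℝ :=
  |H.det|⁻¹ * K (H⁻¹.mulVec v)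

open Matrix

theorem integral_eq_abs_det_smul_integral_comp_add_mulVec {ι E : Type*} [Fintype ι]
    [DecidableEq ι] [NormedAddCommGroup E] [NormedSpace ℝ E] {H : Matrix ι ι ℝ} (hH : H.det ≠ 0)
    (c : ι → ℝ) (φ : (ι → ℝ) → E) :
    ∫ u, φ u = |H.det| • ∫ p, φ (c + H *ᵥ p) := by
  have hinj : Function.Injective (toLin' H) :=
    mulVec_injective_iff_isUnit.mpr ((isUnit_iff_isUnit_det H).mpr hH.isUnit)
  have hemb : MeasurableEmbedding (toLin' H) :=
    ((toLin' H).isClosedEmbedding_of_injective (LinearMap.ker_eq_bot.mpr hinj)).measurableEmbedding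
  calc ∫ u, φ u = ∫ u, φ (c + u) := (integral_add_left_eq_self φ c).symm
    _ = |H.det| • ∫ u, φ (c + u) ∂(Measure.map (toLin' H) volume) := by
      rw [Real.map_matrix_volume_pi_eq_smul_volume_pi hH, integral_smul_measure,
        ENNReal.toReal_ofReal (by positivity), smul_smul, abs_inv,
        mul_inv_cancel₀ (abs_ne_zero.mpr hH), one_smul]
    _ = |H.det| • ∫ p, φ (c + H *ᵥ p) := by
      rw [hemb.integral_map]
      rfl

theorem integral_integral_eq_sq_abs_det_smul_comp_add_mulVec {ι E : Type*} [Fintype ι]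
    [DecidableEq ι] [NormedAddCommGroup E] [NormedSpace ℝ E] {H : Matrix ι ι ℝ} (hH : H.det ≠ 0)
    (x t : ι → ℝ) (F : (ι → ℝ) → (ι → ℝ) → E) :
    ∫ u, ∫ v, F u v = |H.det| ^ 2 • ∫ p, ∫ q, F (x + H *ᵥ p) (t + H *ᵥ q) := by
  rw [integral_eq_abs_det_smul_integral_comp_add_mulVec hH x]
  simp_rw [integral_eq_abs_det_smul_integral_comp_add_mulVec hH t (F _), integral_smul, smul_smul,
    sq]

theorem integral_withDensity_ofReal {α E : Type*} [MeasurableSpace α] {μ : Measure α}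
    [NormedAddCommGroup E] [NormedSpace ℝ E] {f : α → ℝ} (hf : Measurable f) (hf0 : ∀ a, 0 ≤ f a)
    (φ : α → E) :
    ∫ a, φ a ∂(μ.withDensity fun a => ENNReal.ofReal (f a)) = ∫ a, f a • φ a ∂μ := by
  simp_rw [integral_withDensity_eq_integral_toReal_smul hf.ennreal_ofReal
    (ae_of_all _ fun _ => ENNReal.ofReal_lt_top), ENNReal.toReal_ofReal (hf0 _)]

theorem ProbabilityTheory.IndepFun.integral_comp_eq_integral_prod {Ω α β E : Type*}
    [MeasurableSpace Ω] [MeasurableSpace α] [MeasurableSpace β] [NormedAddCommGroup E]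
    [NormedSpace ℝ E] {μ : Measure Ω} [IsFiniteMeasure μ] {X : Ω → α} {Y : Ω → β}
    (hXY : IndepFun X Y μ) (hX : AEMeasurable X μ) (hY : AEMeasurable Y μ) {g : α × β → E}
    (hg : AEStronglyMeasurable g ((μ.map X).prod (μ.map Y))) :
    ∫ ω, g (X ω, Y ω) ∂μ = ∫ z, g z ∂((μ.map X).prod (μ.map Y)) := by
  rw [← (indepFun_iff_map_prod_eq_prod_map_map hX hY).mp hXY] at hg ⊢
  exact (integral_map (hX.prodMk hY) hg).symm

section kernelScaled

variable {d : ℕ} {H : Matrix (Fin d) (Fin d) ℝ} {K : (Fin d → ℝ) → ℝ}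

theorem kernelScaled_mulVec (hH : H.det ≠ 0) (p : Fin d → ℝ) :
    kernelScaled H K (H *ᵥ p) = |H.det|⁻¹ * K p := by
  rw [kernelScaled, mulVec_mulVec, nonsing_inv_mul H hH.isUnit, one_mulVec]

theorem measurable_kernelScaled (hK : Measurable K) : Measurable (kernelScaled H K) :=
  measurable_const.mul (hK.comp (toLin' H⁻¹).continuous_of_finiteDimensional.measurable)

theorem abs_kernelScaled_le {C : ℝ} (hK : ∀ u, |K u| ≤ C) (v : Fin d → ℝ) :
    |kernelScaled H K v| ≤ |H.det|⁻¹ * C := by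
  rw [kernelScaled, abs_mul, abs_inv, abs_abs]
  gcongr
  exact hK _

end kernelScaled

theorem expectation_W3n_general {d : ℕ}
    {Ω : Type*} [MeasurableSpace Ω] (μ : Measure Ω) [IsProbabilityMeasure μ]
    (X Y : Ω → (Fin d → ℝ)) (hXmeas : Measurable X) (hYmeas : Measurable Y)
    (hindep : IndepFun X Y μ)
    (f : (Fin d → ℝ) → ℝ) (hfmeas : Measurable f) (hfnonneg : ∀ y, 0 ≤ f y)
    (hlawX : μ.map X = volume.withDensity (fun y => ENNReal.ofReal (f y)))
    (hlawY : μ.map Y = volume.withDensity (fun y => ENNReal.ofReal (f y)))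
    (H : Matrix (Fin d) (Fin d) ℝ) (hH : H.det ≠ 0)
    (K : (Fin d → ℝ) → ℝ) (hKmeas : Measurable K) (hKbd : ∃ C, ∀ u, |K u| ≤ C)
    (ρ : (Fin d → ℝ) → ℝ) (hρmeas : Measurable ρ) (hρbd : ∃ C, ∀ u, |ρ u| ≤ C)
    (x t : Fin d → ℝ) :
    ∫ ω, (kernelScaled H K (X ω - x)) ^ 2 * (kernelScaled H K (Y ω - t)) ^ 2 *
        (ρ (X ω - Y ω)) ^ 2 ∂μ =
      (|H.det| ^ 2)⁻¹ *
        ∫ p, ∫ q, (K p) ^ 2 * (K q) ^ 2 * (ρ (x - t + H.mulVec (p - q))) ^ 2 *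
          f (x + H.mulVec p) * f (t + H.mulVec q) := by
  obtain ⟨CK, hCK⟩ := hKbd
  obtain ⟨Cρ, hCρ⟩ := hρbd
  set ν := volume.withDensity fun y => ENNReal.ofReal (f y)
  have : IsProbabilityMeasure ν := hlawX ▸ Measure.isProbabilityMeasure_map hXmeas.aemeasurable
  set g : (Fin d → ℝ) × (Fin d → ℝ) → ℝ := fun z =>
    kernelScaled H K (z.1 - x) ^ 2 * kernelScaled H K (z.2 - t) ^ 2 * ρ (z.1 - z.2) ^ 2
  have hg_meas : Measurable g := by
    have := measurable_kernelScaled (H := H) hKmeas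
    fun_prop
  have hg_int : Integrable g (ν.prod ν) := by
    refine .of_bound hg_meas.aestronglyMeasurable
      ((|H.det|⁻¹ * CK) ^ 2 * (|H.det|⁻¹ * CK) ^ 2 * Cρ ^ 2) (ae_of_all _ fun z => ?_)
    simp only [g, Real.norm_eq_abs, abs_mul, abs_pow]
    gcongr <;> first | exact abs_kernelScaled_le hCK _ | exact hCρ _
  have hg_affine : ∀ p q, g (x + H *ᵥ p, t + H *ᵥ q) =
      (|H.det|⁻¹) ^ 4 * (K p ^ 2 * K q ^ 2 * ρ (x - t + H *ᵥ (p - q)) ^ 2) := by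
    intro p q
    simp only [g, add_sub_cancel_left, kernelScaled_mulVec hH, mulVec_sub,
      show x + H *ᵥ p - (t + H *ᵥ q) = x - t + (H *ᵥ p - H *ᵥ q) by abel]
    ring
  calc _ = ∫ z, g z ∂(ν.prod ν) := by
        rw [hindep.integral_comp_eq_integral_prod hXmeas.aemeasurable hYmeas.aemeasurable
          hg_meas.aestronglyMeasurable, hlawX, hlawY]
    _ = ∫ u, ∫ v, f u * f v * g (u, v) := by
        rw [integral_prod g hg_int]
        simp only [ν, integral_withDensity_ofReal hfmeas hfnonneg, smul_eq_mul,
          ← integral_const_mul, mul_assoc]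
    _ = |H.det| ^ 2 * ∫ p, ∫ q, f (x + H *ᵥ p) * f (t + H *ᵥ q) *
          g (x + H *ᵥ p, t + H *ᵥ q) :=
        integral_integral_eq_sq_abs_det_smul_comp_add_mulVec hH x t
          fun u v => f u * f v * g (u, v)
    _ = _ := by
        simp_rw [hg_affine, ← integral_const_mul]
        have : |H.det| ≠ 0 := abs_ne_zero.mpr hH
        congr 1
        ext p
        congr 1
        ext q
        field_simp

/-- Expectation computation in Lemma 3:
`E[K_H(X−x)² K_H(Y−t)² ρ(X−Y)²]
  = |det H|⁻² ∫∫ K(p)² K(q)² ρ(x−t+H(p−q))² f(x+Hp) f(t+Hq) dp dq`. -/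
theorem expectation_W3n {d : ℕ} (hd : 1 ≤ d)
    {Ω : Type*} [MeasurableSpace Ω] (μ : Measure Ω) [IsProbabilityMeasure μ]
    (X Y : Ω → (Fin d → ℝ)) (hXmeas : Measurable X) (hYmeas : Measurable Y)
    (hindep : IndepFun X Y μ)
    (f : (Fin d → ℝ) → ℝ) (hfmeas : Measurable f) (hfnonneg : ∀ y, 0 ≤ f y)
    (hlawX : μ.map X = volume.withDensity (fun y => ENNReal.ofReal (f y)))
    (hlawY : μ.map Y = volume.withDensity (fun y => ENNReal.ofReal (f y)))
    (H : Matrix (Fin d) (Fin d) ℝ) (hH : H.det ≠ 0)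
    (K : (Fin d → ℝ) → ℝ) (hKmeas : Measurable K) (hKbd : ∃ C, ∀ u, |K u| ≤ C)
    (hKsupp : HasCompactSupport K)
    (ρ : (Fin d → ℝ) → ℝ) (hρmeas : Measurable ρ) (hρbd : ∃ C, ∀ u, |ρ u| ≤ C)
    (x t : Fin d → ℝ) :
    ∫ ω, (kernelScaled H K (X ω - x)) ^ 2 * (kernelScaled H K (Y ω - t)) ^ 2 *
        (ρ (X ω - Y ω)) ^ 2 ∂μ =
      (|H.det| ^ 2)⁻¹ *
        ∫ p, ∫ q, (K p) ^ 2 * (K q) ^ 2 * (ρ (x - t + H.mulVec (p - q))) ^ 2 *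
          f (x + H.mulVec p) * f (t + H.mulVec q) :=
  expectation_W3n_general μ X Y hXmeas hYmeas hindep f hfmeas hfnonneg hlawX hlawY H hH K hKmeas
    hKbd ρ hρmeas hρbd x t
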